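/- arXiv:1610.05553 — 5 statements merged into one kernel-verified Lean document; each statement's English description precedes it below -/
import Mathlib

section
/- For every k ≥ 1, the k-th convergent of the non-ordinary continued fraction K(x_n/y_n) equals the k-th convergent of the ordinary continued fraction K(I/a_n); that is, y_0 + D 1 k = E 0 k for all k ≥ 1. -/
open Matrix

/-- The ordered product `G_{2m} = t₁ t₂⁻ᵀ t₃ t₄⁻ᵀ ⋯ t_{2m−1} t_{2m}⁻ᵀ`
(odd-index factors `t_i`, even-index factors `t_i⁻ᵀ`). -/
noncomputable def Geven (n : ℕ) (t : ℕ → Matrix (Fin n) (Fin n) ℝ) (m : ℕ) :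
    Matrix (Fin n) (Fin n) ℝ :=
  (((List.range (2*m)).map (fun i => if Odd (i+1) then t (i+1) else ((t (i+1))ᵀ)⁻¹)).prod)

/-- The ordered product `G_{2m+1} = t₁⁻ᵀ t₂ t₃⁻ᵀ t₄ ⋯ t_{2m} t_{2m+1}⁻ᵀ`
(odd-index factors `t_i⁻ᵀ`, even-index factors `t_i`). -/
noncomputable def Godd (n : ℕ) (t : ℕ → Matrix (Fin n) (Fin n) ℝ) (m : ℕ) :
    Matrix (Fin n) (Fin n) ℝ :=
  (((List.range (2*m+1)).map (fun i => if Odd (i+1) then ((t (i+1))ᵀ)⁻¹ else t (i+1))).prod)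

lemma list_prod_inv_transpose {n : ℕ} (L : List (Matrix (Fin n) (Fin n) ℝ)) :
    ((L.prod)ᵀ)⁻¹ = (L.map fun A => (Aᵀ)⁻¹).prod := by
  induction L with
  | nil => simp
  | cons A L ih =>
      simp only [List.prod_cons, List.map_cons, Matrix.transpose_mul, Matrix.mul_inv_rev, ih]

noncomputable def Hmat (n : ℕ) (t : ℕ → Matrix (Fin n) (Fin n) ℝ) (j : ℕ) :
    Matrix (Fin n) (Fin n) ℝ :=
  (((List.range j).map (fun i => if Even (i+j) then t (i+1) else ((t (i+1))ᵀ)⁻¹)).prod)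

lemma Hmat_zero (n : ℕ) (t : ℕ → Matrix (Fin n) (Fin n) ℝ) : Hmat n t 0 = 1 := by
  simp [Hmat]

lemma Hmat_even (n : ℕ) (t : ℕ → Matrix (Fin n) (Fin n) ℝ) (m : ℕ) :
    Hmat n t (2*m) = Geven n t m := by
  unfold Hmat Geven
  congr 1
  apply List.map_congr_left
  intro i _
  have h1 : Even (i + 2*m) ↔ Even i := by
    simp [Nat.even_iff]
  by_cases h : Even i <;> simp [h1, Nat.odd_add_one, h, Nat.not_even_iff_odd, Nat.not_odd_iff_even]

lemma Hmat_odd (n : ℕ) (t : ℕ → Matrix (Fin n) (Fin n) ℝ) (m : ℕ) :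
    Hmat n t (2*m+1) = Godd n t m := by
  unfold Hmat Godd
  congr 1
  apply List.map_congr_left
  intro i _
  have h1 : Even (i + (2*m+1)) ↔ ¬ Even i := by
    simp [Nat.even_iff]; omega
  by_cases h : Even i <;> simp [h1, Nat.odd_add_one, h, Nat.not_even_iff_odd, Nat.not_odd_iff_even]

lemma Hmat_succ {n : ℕ} {t : ℕ → Matrix (Fin n) (Fin n) ℝ}
    (ht : ∀ i, IsUnit (t (i+1)).det) (j : ℕ) :
    Hmat n t (j+1) = ((Hmat n t j)ᵀ)⁻¹ * ((t (j+1))ᵀ)⁻¹ := by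
  unfold Hmat
  rw [List.range_succ, List.map_append, List.prod_append, list_prod_inv_transpose,
    List.map_map]
  have hlast : ¬ Even (j + (j+1)) := by
    simp [Nat.even_iff]; omega
  congr 1
  · congr 1
    apply List.map_congr_left
    intro i _
    by_cases h : Even (i + j)
    · have h' : ¬ Even (i + (j+1)) := by
        simp [Nat.even_iff] at h ⊢; omega
      simp [Function.comp, h, h']
    · have h' : Even (i + (j+1)) := by
        simp [Nat.even_iff] at h ⊢; omega
      have : (((t (i+1))ᵀ)⁻¹ᵀ)⁻¹ = t (i+1) := by
        rw [Matrix.transpose_nonsing_inv, Matrix.transpose_transpose,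
          Matrix.nonsing_inv_nonsing_inv]
        exact ht i
      simp [Function.comp, h, h', this]
  · simp [hlast]

lemma Hmat_isUnit {n : ℕ} {t : ℕ → Matrix (Fin n) (Fin n) ℝ}
    (ht : ∀ i, IsUnit (t (i+1)).det) (j : ℕ) : IsUnit (Hmat n t j).det := by
  induction j with
  | zero => simp [Hmat_zero]
  | succ j ih =>
      rw [Hmat_succ ht, Matrix.det_mul]
      apply IsUnit.mul
      · rw [Matrix.det_nonsing_inv, Matrix.det_transpose]
        exact isUnit_ringInverse.mpr ih
      · rw [Matrix.det_nonsing_inv, Matrix.det_transpose]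
        exact isUnit_ringInverse.mpr (ht j)

lemma my_conj_inv {n : ℕ} {H T : Matrix (Fin n) (Fin n) ℝ} (S : Matrix (Fin n) (Fin n) ℝ)
    (hH : IsUnit H.det) (hT : IsUnit T.det) :
    (((Hᵀ)⁻¹ * (Tᵀ)⁻¹) * S * ((Hᵀ)⁻¹ * (Tᵀ)⁻¹)ᵀ)⁻¹ = H * T * S⁻¹ * (Tᵀ * Hᵀ) := by
  have hHT : IsUnit (Hᵀ).det := by rwa [Matrix.det_transpose]
  have hTT : IsUnit (Tᵀ).det := by rwa [Matrix.det_transpose]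
  simp only [Matrix.transpose_mul, Matrix.mul_inv_rev, Matrix.transpose_nonsing_inv,
    Matrix.transpose_transpose, Matrix.nonsing_inv_nonsing_inv _ hH,
    Matrix.nonsing_inv_nonsing_inv _ hT, Matrix.nonsing_inv_nonsing_inv _ hHT,
    Matrix.nonsing_inv_nonsing_inv _ hTT]
  noncomm_ring

/-- Every convergent of the non-ordinary continued fraction `K(x_n/y_n)` equals
the corresponding convergent of the ordinary continued fraction `K(I/a_n)`:
`y₀ + D 1 k = E 0 k` for all `k ≥ 1`. -/
theorem nonordinary_eq_ordinary_convergents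
    (n : ℕ) (hn : 1 ≤ n)
    (t : ℕ → Matrix (Fin n) (Fin n) ℝ)
    (ht_lower : ∀ j, 1 ≤ j → ∀ i k : Fin n, i < k → t j i k = 0)
    (ht_diag : ∀ j, 1 ≤ j → ∀ i : Fin n, 0 < t j i i)
    (x : ℕ → Matrix (Fin n) (Fin n) ℝ)
    (hx : ∀ j, 1 ≤ j → x j = t j * (t j)ᵀ)
    (y : ℕ → Matrix (Fin n) (Fin n) ℝ)
    (hy : ∀ j, (y j).PosDef)
    (D : ℕ → ℕ → Matrix (Fin n) (Fin n) ℝ)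
    (hD_diag : ∀ k, 1 ≤ k → D k k = t k * (y k)⁻¹ * (t k)ᵀ)
    (hD_rec : ∀ j k, 1 ≤ j → j < k → D j k = t j * (y j + D (j+1) k)⁻¹ * (t j)ᵀ)
    (a : ℕ → Matrix (Fin n) (Fin n) ℝ)
    (ha_zero : a 0 = y 0)
    (ha_even : ∀ m, 1 ≤ m → a (2*m) = Geven n t m * y (2*m) * (Geven n t m)ᵀ)
    (ha_odd : ∀ m : ℕ, a (2*m+1) = Godd n t m * y (2*m+1) * (Godd n t m)ᵀ)
    (E : ℕ → ℕ → Matrix (Fin n) (Fin n) ℝ)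
    (hE_diag : ∀ k, E k k = a k)
    (hE_rec : ∀ j k, j < k → E j k = a j + (E (j+1) k)⁻¹) :
    ∀ k, 1 ≤ k → y 0 + D 1 k = E 0 k := by
  have ht_unit : ∀ i : ℕ, IsUnit (t (i+1)).det := by
    intro i
    have hbt : (t (i+1)).BlockTriangular OrderDual.toDual := by
      intro r s hrs
      exact ht_lower (i+1) (by omega) r s hrs
    rw [Matrix.det_of_lowerTriangular _ hbt]
    exact (Finset.prod_pos (fun r _ => ht_diag (i+1) (by omega) r)).ne'.isUnit
  have a_eq : ∀ j, a j = Hmat n t j * y j * (Hmat n t j)ᵀ := by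
    intro j
    rcases Nat.even_or_odd j with ⟨m, hm⟩ | ⟨m, hm⟩
    · have hj : j = 2*m := by omega
      subst hj
      rcases Nat.eq_zero_or_pos m with rfl | hm1
      · simp [Hmat_zero, ha_zero]
      · rw [ha_even m hm1, Hmat_even]
    · have hj : j = 2*m+1 := by omega
      subst hj
      rw [ha_odd m, Hmat_odd]
  have key : ∀ d i, Hmat n t i * D (i+1) (i+1+d) * (Hmat n t i)ᵀ = (E (i+1) (i+1+d))⁻¹ := by
    intro d
    induction d with
    | zero =>
        intro i
        rw [hE_diag, hD_diag (i+1) (by omega), a_eq (i+1), Hmat_succ ht_unit i,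
          my_conj_inv (y (i+1)) (Hmat_isUnit ht_unit i) (ht_unit i)]
        noncomm_ring
    | succ d ih =>
        intro i
        have hk : i+1+(d+1) = (i+2)+d := by omega
        rw [hk, hE_rec (i+1) (i+2+d) (by omega), hD_rec (i+1) (i+2+d) (by omega) (by omega)]
        have ih' := ih (i+1)
        have hk2 : i+1+1+d = i+2+d := by omega
        rw [hk2] at ih'
        rw [← ih', a_eq (i+1), Hmat_succ ht_unit i]
        have hsum : ((Hmat n t i)ᵀ⁻¹ * (t (i+1))ᵀ⁻¹) * y (i+1) * ((Hmat n t i)ᵀ⁻¹ * (t (i+1))ᵀ⁻¹)ᵀ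
            + ((Hmat n t i)ᵀ⁻¹ * (t (i+1))ᵀ⁻¹) * D (i+2) (i+2+d) * ((Hmat n t i)ᵀ⁻¹ * (t (i+1))ᵀ⁻¹)ᵀ
            = ((Hmat n t i)ᵀ⁻¹ * (t (i+1))ᵀ⁻¹) * (y (i+1) + D (i+2) (i+2+d))
              * ((Hmat n t i)ᵀ⁻¹ * (t (i+1))ᵀ⁻¹)ᵀ := by
          noncomm_ring
        rw [hsum, my_conj_inv _ (Hmat_isUnit ht_unit i) (ht_unit i)]
        noncomm_ring
  intro k hk
  obtain ⟨d, rfl⟩ : ∃ d, k = 1 + d := ⟨k - 1, by omega⟩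
  have h0 := key d 0
  rw [Hmat_zero, Matrix.transpose_one, one_mul, mul_one] at h0
  rw [hE_rec 0 (1+d) (by omega), ha_zero, ← h0]
end

section
/- For every k ≥ 1, the matrix (−1)^{k+1} (B 1 k − B 1 (k+1)) is symmetric positive definite; i.e., consecutive convergents of the continued fraction alternate in the Loewner order. -/
open Matrix

section Aux

variable {n : ℕ}

lemma posDef_congr {A C : Matrix (Fin n) (Fin n) ℝ} (hA : A.PosDef)
    (hC : IsUnit C.det) : (C * A * Cᵀ).PosDef := by
  have hherm : (C * A * Cᵀ).IsHermitian := by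
    have h := hA.isHermitian
    simp only [Matrix.IsHermitian, Matrix.conjTranspose_eq_transpose_of_trivial,
      Matrix.transpose_mul, Matrix.transpose_transpose] at h ⊢
    rw [h, Matrix.mul_assoc]
  refine Matrix.PosDef.of_dotProduct_mulVec_pos hherm fun y hy => ?_
  have hy' : Cᵀ *ᵥ y ≠ 0 := by
    intro h0
    apply hy
    have hCt : IsUnit (Cᵀ).det := by rwa [Matrix.det_transpose]
    have := congrArg (fun v => (Cᵀ)⁻¹ *ᵥ v) h0
    simpa [Matrix.mulVec_mulVec, Matrix.nonsing_inv_mul _ hCt] using this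
  have key : star y ⬝ᵥ (C * A * Cᵀ) *ᵥ y = star (Cᵀ *ᵥ y) ⬝ᵥ A *ᵥ (Cᵀ *ᵥ y) := by
    rw [star_trivial, star_trivial, ← Matrix.mulVec_mulVec, ← Matrix.mulVec_mulVec,
      Matrix.dotProduct_mulVec y C, Matrix.mulVec_transpose]
  rw [key]
  exact hA.dotProduct_mulVec_pos hy'

lemma inv_sub_inv_posDef {P D : Matrix (Fin n) (Fin n) ℝ} (hP : P.PosDef)
    (hD : D.PosDef) : (P⁻¹ - (P + D)⁻¹).PosDef := by
  have hPd : IsUnit P.det := isUnit_iff_ne_zero.mpr hP.det_pos.ne'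
  have hDd : IsUnit D.det := isUnit_iff_ne_zero.mpr hD.det_pos.ne'
  have hQ : (P + D).PosDef := hP.add hD
  have hQd : IsUnit (P + D).det := isUnit_iff_ne_zero.mpr hQ.det_pos.ne'
  have h1 : P * P⁻¹ = 1 := Matrix.mul_nonsing_inv _ hPd
  have h2 : (P + D) * (P + D)⁻¹ = 1 := Matrix.mul_nonsing_inv _ hQd
  have h3 : D⁻¹ * D = 1 := Matrix.nonsing_inv_mul _ hDd
  have key : (P + P * D⁻¹ * P) * (P⁻¹ - (P + D)⁻¹) = 1 := by
    have expand : (P + P * D⁻¹ * P) * (P⁻¹ - (P + D)⁻¹)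
        = P * P⁻¹ + P * D⁻¹ * (P * P⁻¹) - P * D⁻¹ * ((D + P) * (P + D)⁻¹) := by
      have : P * D⁻¹ * ((D + P) * (P + D)⁻¹)
          = P * (D⁻¹ * D) * (P + D)⁻¹ + P * D⁻¹ * P * (P + D)⁻¹ := by
        noncomm_ring
      rw [this, h3]
      noncomm_ring
    rw [expand, h1, show D + P = P + D from add_comm D P, h2]
    noncomm_ring
  have heq : P⁻¹ - (P + D)⁻¹ = (P + P * D⁻¹ * P)⁻¹ :=
    (Matrix.inv_eq_right_inv key).symm
  have hPt : Pᵀ = P := by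
    have h := hP.isHermitian
    have h' : P.IsSymm := by simpa [Matrix.conjTranspose] using h
    exact h'
  have hsum : (P + P * D⁻¹ * P).PosDef := by
    have := posDef_congr hD.inv hPd
    rw [hPt] at this
    exact hP.add this
  rw [heq]
  exact hsum.inv

end Aux

/-- For every `k ≥ 1`, the matrix `(−1)^(k+1) (B 1 k − B 1 (k+1))` is
symmetric positive definite: consecutive convergents of the continued fraction
`K(x_n / I)` alternate in the Loewner order. -/
theorem alternating_convergents_posDef
    (n : ℕ) (hn : 1 ≤ n)
    (t : ℕ → Matrix (Fin n) (Fin n) ℝ)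
    (ht_lower : ∀ j, 1 ≤ j → ∀ i k : Fin n, i < k → t j i k = 0)
    (ht_diag : ∀ j, 1 ≤ j → ∀ i : Fin n, 0 < t j i i)
    (x : ℕ → Matrix (Fin n) (Fin n) ℝ)
    (hx : ∀ j, 1 ≤ j → x j = t j * (t j)ᵀ)
    (B : ℕ → ℕ → Matrix (Fin n) (Fin n) ℝ)
    (hB_diag : ∀ k, 1 ≤ k → B k k = x k)
    (hB_rec : ∀ j k, 1 ≤ j → j < k → B j k = t j * (1 + B (j+1) k)⁻¹ * (t j)ᵀ) :
    ∀ k, 1 ≤ k → ((-1 : ℝ) ^ (k+1) • (B 1 k - B 1 (k+1))).PosDef := by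
  -- t j is invertible
  have ht_det : ∀ j, 1 ≤ j → IsUnit (t j).det := by
    intro j hj
    have htri : (t j).BlockTriangular OrderDual.toDual := by
      intro a b hab
      exact ht_lower j hj a b hab
    rw [Matrix.det_of_lowerTriangular _ htri]
    exact isUnit_iff_ne_zero.mpr (Finset.prod_ne_zero_iff.mpr
      (fun i _ => (ht_diag j hj i).ne'))
  -- x j is positive definite
  have hx_pd : ∀ j, 1 ≤ j → (x j).PosDef := by
    intro j hj
    rw [hx j hj, show t j * (t j)ᵀ = t j * 1 * (t j)ᵀ by rw [Matrix.mul_one]]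
    exact posDef_congr Matrix.PosDef.one (ht_det j hj)
  -- B j k is positive definite
  have hB_pd : ∀ m j, 1 ≤ j → (B j (j + m)).PosDef := by
    intro m
    induction m with
    | zero => intro j hj; simpa [hB_diag j hj] using hx_pd j hj
    | succ m ih =>
      intro j hj
      rw [hB_rec j (j + (m+1)) hj (by omega)]
      have hpd : (1 + B (j+1) (j + (m+1))).PosDef := by
        have := ih (j+1) (by omega)
        rw [show j + 1 + m = j + (m+1) by omega] at this
        exact Matrix.PosDef.one.add this
      exact posDef_congr hpd.inv (ht_det j hj)
  -- main induction
  have main : ∀ m j, 1 ≤ j →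
      ((-1 : ℝ) ^ m • (B j (j + m) - B j (j + m + 1))).PosDef := by
    intro m
    induction m with
    | zero =>
      intro j hj
      simp only [pow_zero, one_smul, Nat.add_zero]
      rw [hB_diag j hj, hB_rec j (j+1) hj (by omega), hB_diag (j+1) (by omega),
        hx j hj]
      have hkey : t j * (t j)ᵀ - t j * (1 + x (j+1))⁻¹ * (t j)ᵀ
          = t j * (1⁻¹ - (1 + x (j+1))⁻¹) * (t j)ᵀ := by
        rw [inv_one]; noncomm_ring
      rw [hkey]
      exact posDef_congr (inv_sub_inv_posDef Matrix.PosDef.one (hx_pd (j+1) (by omega)))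
        (ht_det j hj)
    | succ m ih =>
      intro j hj
      have ihj := ih (j+1) (by omega)
      set P : Matrix (Fin n) (Fin n) ℝ := 1 + B (j+1) (j + (m+1)) with hPdef
      set Q : Matrix (Fin n) (Fin n) ℝ := 1 + B (j+1) (j + (m+1) + 1) with hQdef
      have hPp : P.PosDef := by
        have := hB_pd m (j+1) (by omega)
        rw [show j + 1 + m = j + (m+1) by omega] at this
        exact Matrix.PosDef.one.add this
      have hQp : Q.PosDef := by
        have := hB_pd (m+1) (j+1) (by omega)
        rw [show j + 1 + (m+1) = j + (m+1) + 1 by omega] at this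
        exact Matrix.PosDef.one.add this
      have hdiff : ((-1 : ℝ) ^ m • (P - Q)).PosDef := by
        have h1 : j + 1 + m = j + (m+1) := by omega
        rw [h1] at ihj
        have : P - Q = B (j+1) (j + (m+1)) - B (j+1) (j + (m+1) + 1) := by
          rw [hPdef, hQdef]; abel
        rw [this]
        exact ihj
      have hrw : B j (j + (m+1)) - B j (j + (m+1) + 1)
          = t j * (P⁻¹ - Q⁻¹) * (t j)ᵀ := by
        rw [hB_rec j (j + (m+1)) hj (by omega),
          hB_rec j (j + (m+1) + 1) hj (by omega), hPdef, hQdef]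
        noncomm_ring
      rw [hrw]
      rcases Nat.even_or_odd m with hm | hm
      · -- (-1)^m = 1 : P - Q posdef, goal sign is -1
        rw [hm.neg_one_pow, one_smul] at hdiff
        have hPQ : P = Q + (P - Q) := by abel
        have hres : (Q⁻¹ - P⁻¹).PosDef := by
          have := inv_sub_inv_posDef hQp hdiff
          rwa [← hPQ] at this
        have hsign : (-1 : ℝ) ^ (m + 1) = -1 := (hm.add_one).neg_one_pow
        rw [hsign]
        have : (-1 : ℝ) • (t j * (P⁻¹ - Q⁻¹) * (t j)ᵀ)
            = t j * (Q⁻¹ - P⁻¹) * (t j)ᵀ := by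
          rw [neg_one_smul]; noncomm_ring
        rw [this]
        exact posDef_congr hres (ht_det j hj)
      · -- (-1)^m = -1 : Q - P posdef, goal sign is 1
        rw [hm.neg_one_pow, neg_one_smul, neg_sub] at hdiff
        have hQP : Q = P + (Q - P) := by abel
        have hres : (P⁻¹ - Q⁻¹).PosDef := by
          have := inv_sub_inv_posDef hPp hdiff
          rwa [← hQP] at this
        have hsign : (-1 : ℝ) ^ (m + 1) = 1 := (hm.add_one).neg_one_pow
        rw [hsign, one_smul]
        exact posDef_congr hres (ht_det j hj)
  intro k hk
  obtain ⟨m, rfl⟩ : ∃ m, k = 1 + m := ⟨k - 1, by omega⟩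
  have := main m 1 le_rfl
  have hsign : (-1 : ℝ) ^ (1 + m + 1) = (-1 : ℝ) ^ m := by
    rw [show 1 + m + 1 = m + 2 by omega, pow_add]
    norm_num
  rw [hsign]
  exact this
end

section
/- Let (u_m)_{m≥1} be a sequence of elements of C such that u_m − u_{m+1} ∈ C for every m and u_m → 0 in H. Then the alternating series ∑_{m≥1} (−1)^m u_m converges, i.e. the sequence of partial sums N ↦ ∑_{m=1}^{N} (−1)^m u_m converges in H. -/
open Filter

/-- In a finite-dimensional real inner product space `H` with a nonempty closed
convex self-dual cone `C`, if `(u_m)_{m≥1}` lies in `C`, is decreasing (`u_m − u_{m+1} ∈ C`)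
and tends to `0`, then the alternating series `∑_{m≥1} (−1)^m u_m` converges. -/
theorem alternating_series_converges_in_cone
    (H : Type*) [NormedAddCommGroup H] [InnerProductSpace ℝ H] [FiniteDimensional ℝ H]
    (C : Set H) (hC_ne : C.Nonempty) (hC_closed : IsClosed C) (hC_convex : Convex ℝ C)
    (hC_cone : ∀ c : ℝ, 0 ≤ c → ∀ x ∈ C, c • x ∈ C)
    (hC_selfdual : C = {x : H | ∀ y ∈ C, 0 ≤ (inner ℝ x y : ℝ)})
    (u : ℕ → H) (hu : ∀ m, 1 ≤ m → u m ∈ C)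
    (hdec : ∀ m, 1 ≤ m → u m - u (m+1) ∈ C)
    (hlim : Tendsto u atTop (nhds 0)) :
    ∃ L : H, Tendsto (fun N => ∑ m ∈ Finset.Icc 1 N, (-1 : ℝ) ^ m • u m) atTop (nhds L) := by
  -- basic cone facts
  have hzero : (0 : H) ∈ C := by
    obtain ⟨x, hx⟩ := hC_ne
    simpa using hC_cone 0 le_rfl x hx
  have hadd : ∀ x ∈ C, ∀ y ∈ C, x + y ∈ C := by
    intro x hx y hy
    have h := hC_convex hx hy (by norm_num : (0:ℝ) ≤ 1/2) (by norm_num : (0:ℝ) ≤ 1/2)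
      (by norm_num)
    have h2 := hC_cone 2 (by norm_num) _ h
    have : (2:ℝ) • ((1/2 : ℝ) • x + (1/2 : ℝ) • y) = x + y := by
      rw [smul_add, smul_smul, smul_smul]; norm_num
    rwa [this] at h2
  have hinner : ∀ x ∈ C, ∀ y ∈ C, 0 ≤ (inner ℝ x y : ℝ) := by
    intro x hx y hy
    rw [hC_selfdual] at hx
    exact hx y hy
  -- tails
  set T : ℕ → ℕ → H := fun a n => (-1:ℝ)^a • ∑ k ∈ Finset.Icc a n, (-1:ℝ)^k • u k with hT
  have hTrec : ∀ a n, a ≤ n → T a n = u a - T (a+1) n := by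
    intro a n h
    simp only [hT]
    rw [Finset.Icc_eq_cons_Ioc h, Finset.sum_cons, smul_add, smul_smul,
      ← Finset.Icc_add_one_left_eq_Ioc]
    have h1 : ((-1:ℝ)^a * (-1:ℝ)^a) = 1 := by
      rw [← pow_add]; simp [pow_mul]
    rw [h1, one_smul]
    have h2 : ((-1:ℝ)^a) = -(-1:ℝ)^(a+1) := by ring
    rw [h2, neg_smul, sub_eq_add_neg]
  have hTempty : ∀ a n, n < a → T a n = 0 := by
    intro a n h
    simp [hT, Finset.Icc_eq_empty_of_lt h]
  have key : ∀ d a n, 1 ≤ a → n < a + d → T a n ∈ C ∧ u a - T a n ∈ C := by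
    intro d
    induction d with
    | zero =>
      intro a n ha hn
      rw [hTempty a n (by omega)]
      exact ⟨hzero, by simpa using hu a ha⟩
    | succ d ih =>
      intro a n ha hn
      by_cases h : n < a
      · rw [hTempty a n h]
        exact ⟨hzero, by simpa using hu a ha⟩
      · push_neg at h
        obtain ⟨h1, h2⟩ := ih (a+1) n (by omega) (by omega)
        rw [hTrec a n h]
        constructor
        · have : u a - T (a+1) n = (u a - u (a+1)) + (u (a+1) - T (a+1) n) := by abel
          rw [this]
          exact hadd _ (hdec a ha) _ h2
        · simpa using h1
  have keyall : ∀ a n, 1 ≤ a → T a n ∈ C ∧ u a - T a n ∈ C := by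
    intro a n ha
    exact key (n+1) a n ha (by omega)
  -- norm bound
  have hbound : ∀ a n, 1 ≤ a → ‖T a n‖ ≤ ‖u a‖ := by
    intro a n ha
    obtain ⟨h1, h2⟩ := keyall a n ha
    have hi : 0 ≤ (inner ℝ (T a n) (u a - T a n) : ℝ) := hinner _ h1 _ h2
    rw [inner_sub_right, real_inner_self_eq_norm_sq] at hi
    have hcs : (inner ℝ (T a n) (u a) : ℝ) ≤ ‖T a n‖ * ‖u a‖ := real_inner_le_norm _ _
    have hn : 0 ≤ ‖T a n‖ := norm_nonneg _
    have hn2 : 0 ≤ ‖u a‖ := norm_nonneg _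
    nlinarith [sq_nonneg (‖T a n‖ - ‖u a‖)]
  -- Cauchy
  set S : ℕ → H := fun N => ∑ m ∈ Finset.Icc 1 N, (-1:ℝ)^m • u m with hS
  have hdiff : ∀ N n, N ≤ n → S n - S N = (-1:ℝ)^(N+1) • T (N+1) n := by
    intro N n h
    simp only [hS, hT, smul_smul]
    have h1 : ((-1:ℝ)^(N+1) * (-1:ℝ)^(N+1)) = 1 := by
      rw [← pow_add]; simp [pow_mul]
    rw [h1, one_smul]
    have : Finset.Icc 1 n = Finset.Icc 1 N ∪ Finset.Icc (N+1) n := by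
      rw [Finset.Icc_add_one_left_eq_Ioc]
      ext x
      simp only [Finset.mem_Icc, Finset.mem_union, Finset.mem_Ioc]
      omega
    rw [this, Finset.sum_union]
    · abel
    · rw [Finset.disjoint_left]
      intro x hx hx'
      simp only [Finset.mem_Icc] at hx hx'
      omega
  have hcauchy : CauchySeq S := by
    apply cauchySeq_of_le_tendsto_0 (fun N => 2 * ‖u (N+1)‖)
    · intro n m N hn hm
      rw [dist_eq_norm]
      have e1 : S n - S m = (S n - S N) - (S m - S N) := by abel
      have b : ∀ k, N ≤ k → ‖S k - S N‖ ≤ ‖u (N+1)‖ := by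
        intro k hk
        rw [hdiff N k hk, norm_smul]
        simp only [norm_pow, norm_neg, norm_one, one_pow, one_mul]
        exact hbound (N+1) k (by omega)
      calc ‖S n - S m‖ ≤ ‖S n - S N‖ + ‖S m - S N‖ := by
            rw [e1]; exact norm_sub_le _ _
        _ ≤ ‖u (N+1)‖ + ‖u (N+1)‖ := add_le_add (b n hn) (b m hm)
        _ = 2 * ‖u (N+1)‖ := by ring
    · have h1 : Tendsto (fun N => u (N+1)) atTop (nhds 0) :=
        hlim.comp (tendsto_add_atTop_nat 1)
      have h2 : Tendsto (fun N => ‖u (N+1)‖) atTop (nhds 0) := by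
        simpa using h1.norm
      have := h2.const_mul (2:ℝ)
      simpa using this
  exact cauchySeq_tendsto_of_complete hcauchy
end

section
/- The following matrix identity holds: ((B 1 1)⁻¹ − (B 1 2)⁻¹)⁻¹ + ((B 1 2)⁻¹ − (B 1 3)⁻¹)⁻¹ = t_1 t_2⁻ᵀ x_3⁻¹ t_2⁻¹ t_1ᵀ. (In the paper's notation this is F_1(x_1,x_2,x_3) = π(x_1)π^{*−1}(x_2)π^{*−1}(x_3)(e).) -/
/-!
Every convergent is a congruence `B₁ₖ = t₁ Mₖ⁻¹ t₁ᵀ` (with `M₁ = 1`, `M₂ = 1 + x₂`,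
`M₃ = 1 + t₂ (1 + x₃)⁻¹ t₂ᵀ`), and `((t M⁻¹ tᵀ)⁻¹ - (t N⁻¹ tᵀ)⁻¹)⁻¹ = t (M - N)⁻¹ tᵀ`.
Here `M₁ - M₂ = -x₂ = t₂ (-1) t₂ᵀ` and `M₂ - M₃ = t₂ (1 - (1 + x₃)⁻¹) t₂ᵀ`, so the sum is
`t₁ t₂⁻ᵀ ((-1)⁻¹ + (1 - (1 + x₃)⁻¹)⁻¹) t₂⁻¹ t₁ᵀ`, and `(1 - (1 + y)⁻¹)⁻¹ = 1 + y⁻¹`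
collapses the middle factor to `x₃⁻¹`.
-/

open Matrix

open scoped ComplexOrder

namespace Matrix

variable {n K : Type*} [Fintype n] [DecidableEq n]

theorem isUnit_det_of_isLowerTriangular [LinearOrder n] [CommRing K] {M : Matrix n n K}
    (hM : M.IsLowerTriangular) (hdiag : ∀ i, IsUnit (M i i)) : IsUnit M.det := by
  rw [det_of_isLowerTriangular M hM]
  exact IsUnit.prod_iff.2 fun i _ => hdiag i

theorem PosSemidef.isUnit_det_one_add {𝕜 : Type*} [RCLike 𝕜] {A : Matrix n n 𝕜}
    (hA : A.PosSemidef) : IsUnit (1 + A).det :=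
  (isUnit_iff_isUnit_det _).1 (PosDef.one.add_posSemidef hA).isUnit

omit [DecidableEq n] in
theorem posSemidef_self_mul_transpose {m : Type*} [Fintype m] (A : Matrix n m ℝ) :
    (A * Aᵀ).PosSemidef := by
  simpa only [conjTranspose_eq_transpose_of_trivial] using posSemidef_self_mul_conjTranspose A

omit [DecidableEq n] in
theorem PosSemidef.mul_mul_transpose_same {m : Type*} [Fintype m] {M : Matrix n n ℝ}
    (hM : M.PosSemidef) (v : Matrix m n ℝ) : (v * M * vᵀ).PosSemidef := by
  simpa only [conjTranspose_eq_transpose_of_trivial] using hM.mul_mul_conjTranspose_same v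

section CommRing

variable [CommRing K]

theorem inv_mul_mul_transpose (u M : Matrix n n K) : (u * M * uᵀ)⁻¹ = (uᵀ)⁻¹ * M⁻¹ * u⁻¹ := by
  rw [mul_inv_rev, mul_inv_rev, mul_assoc]

theorem inv_transpose_mul_mul_inv_inv {u : Matrix n n K} (hu : IsUnit u.det) (X : Matrix n n K) :
    ((uᵀ)⁻¹ * X * u⁻¹)⁻¹ = u * X⁻¹ * uᵀ := by
  rw [mul_inv_rev, mul_inv_rev, nonsing_inv_nonsing_inv _ hu,
    nonsing_inv_nonsing_inv _ (isUnit_det_transpose u hu), mul_assoc]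

theorem inv_sub_inv_mul_inv_mul_transpose {u M N : Matrix n n K} (hu : IsUnit u.det)
    (hM : IsUnit M.det) (hN : IsUnit N.det) :
    ((u * M⁻¹ * uᵀ)⁻¹ - (u * N⁻¹ * uᵀ)⁻¹)⁻¹ = u * (M - N)⁻¹ * uᵀ := by
  rw [inv_mul_mul_transpose, inv_mul_mul_transpose, nonsing_inv_nonsing_inv _ hM,
    nonsing_inv_nonsing_inv _ hN, ← sub_mul, ← mul_sub, inv_transpose_mul_mul_inv_inv hu]

theorem inv_neg_one : (-1 : Matrix n n K)⁻¹ = -1 :=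
  inv_eq_left_inv (by rw [neg_mul_neg, mul_one])

theorem inv_one_sub_inv_one_add {y : Matrix n n K} (hy : IsUnit y.det)
    (h1y : IsUnit (1 + y).det) : (1 - (1 + y)⁻¹)⁻¹ = 1 + y⁻¹ := by
  have : 1 - (1 + y)⁻¹ = (1 + y)⁻¹ * y :=
    calc 1 - (1 + y)⁻¹ = (1 + y)⁻¹ * (1 + y) - (1 + y)⁻¹ := by rw [nonsing_inv_mul _ h1y]
      _ = (1 + y)⁻¹ * y := by rw [mul_add, mul_one, add_sub_cancel_left]
  rw [this, mul_inv_rev, nonsing_inv_nonsing_inv _ h1y, mul_add, mul_one,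
    nonsing_inv_mul _ hy, add_comm]

end CommRing

end Matrix

section Convergents

variable {n K : Type*} [Fintype n] [DecidableEq n] [CommRing K]

/-- `u uᵀ`, `u (1 + v vᵀ)⁻¹ uᵀ` and `u (1 + v (1 + y)⁻¹ vᵀ)⁻¹ uᵀ` are the convergents
`[x₁]`, `[x₁, x₂]`, `[x₁, x₂, x₃]` for `x₁ = u uᵀ`, `x₂ = v vᵀ`, `x₃ = y`. -/
theorem inv_sub_inv_add_inv_sub_inv_convergents {u v y : Matrix n n K} (hu : IsUnit u.det)
    (hy : IsUnit y.det) (h1y : IsUnit (1 + y).det) (h1v : IsUnit (1 + v * vᵀ).det)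
    (h1vyv : IsUnit (1 + v * (1 + y)⁻¹ * vᵀ).det) :
    ((u * uᵀ)⁻¹ - (u * (1 + v * vᵀ)⁻¹ * uᵀ)⁻¹)⁻¹
        + ((u * (1 + v * vᵀ)⁻¹ * uᵀ)⁻¹ - (u * (1 + v * (1 + y)⁻¹ * vᵀ)⁻¹ * uᵀ)⁻¹)⁻¹
      = u * (vᵀ)⁻¹ * y⁻¹ * v⁻¹ * uᵀ := by
  have first : ((u * uᵀ)⁻¹ - (u * (1 + v * vᵀ)⁻¹ * uᵀ)⁻¹)⁻¹ = u * (v * (-1) * vᵀ)⁻¹ * uᵀ := by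
    have := inv_sub_inv_mul_inv_mul_transpose (M := 1) hu (by simp) h1v
    rwa [inv_one, mul_one, sub_add_cancel_left, ← neg_mul, ← mul_neg_one v] at this
  have second : ((u * (1 + v * vᵀ)⁻¹ * uᵀ)⁻¹ - (u * (1 + v * (1 + y)⁻¹ * vᵀ)⁻¹ * uᵀ)⁻¹)⁻¹
      = u * (v * (1 - (1 + y)⁻¹) * vᵀ)⁻¹ * uᵀ := by
    rw [inv_sub_inv_mul_inv_mul_transpose hu h1v h1vyv, add_sub_add_left_eq_sub, mul_sub,
      sub_mul, mul_one]
  rw [first, second, ← add_mul, ← mul_add, inv_mul_mul_transpose, inv_mul_mul_transpose,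
    ← add_mul, ← mul_add, Matrix.inv_neg_one, inv_one_sub_inv_one_add hy h1y,
    neg_add_cancel_left]
  simp only [mul_assoc]

end Convergents

theorem F_one_eq_general
    (n : ℕ)
    (t : ℕ → Matrix (Fin n) (Fin n) ℝ)
    (ht_lower : ∀ j, 1 ≤ j → ∀ i k : Fin n, i < k → t j i k = 0)
    (ht_diag : ∀ j, 1 ≤ j → ∀ i : Fin n, 0 < t j i i)
    (x : ℕ → Matrix (Fin n) (Fin n) ℝ)
    (hx : ∀ j, 1 ≤ j → x j = t j * (t j)ᵀ)
    (B : ℕ → ℕ → Matrix (Fin n) (Fin n) ℝ)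
    (hB_diag : ∀ k, 1 ≤ k → B k k = x k)
    (hB_rec : ∀ j k, 1 ≤ j → j < k → B j k = t j * (1 + B (j+1) k)⁻¹ * (t j)ᵀ) :
    ((B 1 1)⁻¹ - (B 1 2)⁻¹)⁻¹ + ((B 1 2)⁻¹ - (B 1 3)⁻¹)⁻¹
      = t 1 * ((t 2)ᵀ)⁻¹ * (x 3)⁻¹ * (t 2)⁻¹ * (t 1)ᵀ := by
  have ht : ∀ j, 1 ≤ j → IsUnit (t j).det := fun j hj =>
    isUnit_det_of_isLowerTriangular (fun i k => ht_lower j hj i k)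
      fun i => (ht_diag j hj i).ne'.isUnit
  have hx3 : (x 3).PosSemidef := hx 3 (by norm_num) ▸ posSemidef_self_mul_transpose (t 3)
  have hx3_det : IsUnit (x 3).det := by
    rw [hx 3 (by norm_num), det_mul, det_transpose]
    exact (ht 3 (by norm_num)).mul (ht 3 (by norm_num))
  have hB11 : B 1 1 = t 1 * (t 1)ᵀ := by rw [hB_diag 1 le_rfl, hx 1 le_rfl]
  have hB12 : B 1 2 = t 1 * (1 + t 2 * (t 2)ᵀ)⁻¹ * (t 1)ᵀ := by
    rw [hB_rec 1 2 le_rfl (by norm_num), hB_diag 2 (by norm_num), hx 2 (by norm_num)]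
  have hB13 : B 1 3 = t 1 * (1 + t 2 * (1 + x 3)⁻¹ * (t 2)ᵀ)⁻¹ * (t 1)ᵀ := by
    rw [hB_rec 1 3 le_rfl (by norm_num), hB_rec 2 3 (by norm_num) (by norm_num),
      hB_diag 3 (by norm_num)]
  rw [hB11, hB12, hB13]
  have hC_inv : ((1 + x 3)⁻¹).PosSemidef := (PosDef.one.add_posSemidef hx3).posSemidef.inv
  exact inv_sub_inv_add_inv_sub_inv_convergents (ht 1 le_rfl) hx3_det hx3.isUnit_det_one_add
    (posSemidef_self_mul_transpose (t 2)).isUnit_det_one_add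
    (hC_inv.mul_mul_transpose_same (t 2)).isUnit_det_one_add

/-- `F₁(x₁,x₂,x₃) = π(x₁)π^{*−1}(x₂)π^{*−1}(x₃)(e)`, i.e.
`((B 1 1)⁻¹ − (B 1 2)⁻¹)⁻¹ + ((B 1 2)⁻¹ − (B 1 3)⁻¹)⁻¹ = t₁ t₂⁻ᵀ x₃⁻¹ t₂⁻¹ t₁ᵀ`. -/
theorem F_one_eq
    (n : ℕ) (hn : 1 ≤ n)
    (t : ℕ → Matrix (Fin n) (Fin n) ℝ)
    (ht_lower : ∀ j, 1 ≤ j → ∀ i k : Fin n, i < k → t j i k = 0)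
    (ht_diag : ∀ j, 1 ≤ j → ∀ i : Fin n, 0 < t j i i)
    (x : ℕ → Matrix (Fin n) (Fin n) ℝ)
    (hx : ∀ j, 1 ≤ j → x j = t j * (t j)ᵀ)
    (B : ℕ → ℕ → Matrix (Fin n) (Fin n) ℝ)
    (hB_diag : ∀ k, 1 ≤ k → B k k = x k)
    (hB_rec : ∀ j k, 1 ≤ j → j < k → B j k = t j * (1 + B (j+1) k)⁻¹ * (t j)ᵀ) :
    ((B 1 1)⁻¹ - (B 1 2)⁻¹)⁻¹ + ((B 1 2)⁻¹ - (B 1 3)⁻¹)⁻¹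
      = t 1 * ((t 2)ᵀ)⁻¹ * (x 3)⁻¹ * (t 2)⁻¹ * (t 1)ᵀ :=
  F_one_eq_general n t ht_lower ht_diag x hx B hB_diag hB_rec
end

section
/- The following matrix identity holds: ((B 1 2)⁻¹ − (B 1 3)⁻¹)⁻¹ + ((B 1 3)⁻¹ − (B 1 4)⁻¹)⁻¹ = − t_1 t_2⁻ᵀ t_3⁻ᵀ (I + t_3ᵀ t_3) x_4⁻¹ (I + t_3ᵀ t_3) t_3⁻¹ t_2⁻¹ t_1ᵀ. (In the paper's notation this is F_2(x_1,x_2,x_3,x_4) = −π(x_1)π^{*−1}(x_2)π^{*−1}(x_3)P(e+π^{*}(x_3)(e))π^{*−1}(x_4)(e).) -/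
open Matrix

private lemma posDef_conj {n : ℕ} {M : Matrix (Fin n) (Fin n) ℝ}
    (hM : M.PosDef) (s : Matrix (Fin n) (Fin n) ℝ) (hs : IsUnit s.det) :
    (s * M * sᵀ).PosDef := by
  haveI := s.invertibleOfIsUnitDet hs
  have hMt : Mᵀ = M := by
    have h := hM.1
    rwa [Matrix.IsHermitian, Matrix.conjTranspose_eq_transpose_of_trivial] at h
  refine Matrix.PosDef.of_dotProduct_mulVec_pos ?_ ?_
  · show (s * M * sᵀ)ᴴ = s * M * sᵀ
    rw [Matrix.conjTranspose_eq_transpose_of_trivial, Matrix.transpose_mul,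
      Matrix.transpose_mul, Matrix.transpose_transpose, hMt, Matrix.mul_assoc]
  · intro v hv
    have hv' : sᵀ *ᵥ v ≠ 0 := by
      intro h
      exact hv (Matrix.mulVec_injective_of_invertible sᵀ (by simpa using h))
    have h2 := hM.dotProduct_mulVec_pos hv'
    have e : v ⬝ᵥ ((s * M * sᵀ) *ᵥ v) = (sᵀ *ᵥ v) ⬝ᵥ (M *ᵥ (sᵀ *ᵥ v)) := by
      rw [← Matrix.mulVec_mulVec, ← Matrix.mulVec_mulVec, Matrix.dotProduct_mulVec,
        Matrix.mulVec_transpose]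
    simpa [e] using h2

/-- `F₂(x₁,x₂,x₃,x₄) = −π(x₁)π^{*−1}(x₂)π^{*−1}(x₃)P(e+π^{*}(x₃)(e))π^{*−1}(x₄)(e)`,
i.e. `((B 1 2)⁻¹ − (B 1 3)⁻¹)⁻¹ + ((B 1 3)⁻¹ − (B 1 4)⁻¹)⁻¹
  = − t₁ t₂⁻ᵀ t₃⁻ᵀ (I + t₃ᵀ t₃) x₄⁻¹ (I + t₃ᵀ t₃) t₃⁻¹ t₂⁻¹ t₁ᵀ`. -/
theorem F_two_eq
    (n : ℕ) (hn : 1 ≤ n)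
    (t : ℕ → Matrix (Fin n) (Fin n) ℝ)
    (ht_lower : ∀ j, 1 ≤ j → ∀ i k : Fin n, i < k → t j i k = 0)
    (ht_diag : ∀ j, 1 ≤ j → ∀ i : Fin n, 0 < t j i i)
    (x : ℕ → Matrix (Fin n) (Fin n) ℝ)
    (hx : ∀ j, 1 ≤ j → x j = t j * (t j)ᵀ)
    (B : ℕ → ℕ → Matrix (Fin n) (Fin n) ℝ)
    (hB_diag : ∀ k, 1 ≤ k → B k k = x k)
    (hB_rec : ∀ j k, 1 ≤ j → j < k → B j k = t j * (1 + B (j+1) k)⁻¹ * (t j)ᵀ) :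
    ((B 1 2)⁻¹ - (B 1 3)⁻¹)⁻¹ + ((B 1 3)⁻¹ - (B 1 4)⁻¹)⁻¹
      = -(t 1 * ((t 2)ᵀ)⁻¹ * ((t 3)ᵀ)⁻¹ * (1 + (t 3)ᵀ * t 3) * (x 4)⁻¹ *
          (1 + (t 3)ᵀ * t 3) * (t 3)⁻¹ * (t 2)⁻¹ * (t 1)ᵀ) := by
  -- invertibility of the Cholesky factors
  have hu : ∀ j, 1 ≤ j → IsUnit (t j).det := by
    intro j hj
    have htri : (t j).BlockTriangular OrderDual.toDual := by
      intro i k h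
      exact ht_lower j hj i k (OrderDual.toDual_lt_toDual.mp h)
    rw [Matrix.det_of_lowerTriangular _ htri]
    exact isUnit_iff_ne_zero.mpr
      (ne_of_gt (Finset.prod_pos (fun i _ => ht_diag j hj i)))
  haveI i1 : Invertible (t 1) := (t 1).invertibleOfIsUnitDet (hu 1 le_rfl)
  haveI i2 : Invertible (t 2) := (t 2).invertibleOfIsUnitDet (hu 2 (by norm_num))
  haveI i3 : Invertible (t 3) := (t 3).invertibleOfIsUnitDet (hu 3 (by norm_num))
  haveI i4 : Invertible (t 4) := (t 4).invertibleOfIsUnitDet (hu 4 (by norm_num))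
  have pdu : ∀ {M : Matrix (Fin n) (Fin n) ℝ}, M.PosDef → IsUnit M.det :=
    fun h => isUnit_iff_ne_zero.mpr (ne_of_gt h.det_pos)
  -- positive definiteness
  have hpdx : ∀ j, 1 ≤ j → (x j).PosDef := by
    intro j hj
    have h := posDef_conj (Matrix.PosDef.one) (t j) (hu j hj)
    rw [hx j hj]
    simpa using h
  have pdx2 := hpdx 2 (by norm_num)
  have pdx3 := hpdx 3 (by norm_num)
  have pdx4 := hpdx 4 (by norm_num)
  have pd1x2 : (1 + x 2).PosDef := Matrix.PosDef.one.add pdx2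
  have pd1x3 : (1 + x 3).PosDef := Matrix.PosDef.one.add pdx3
  have pd1x4 : (1 + x 4).PosDef := Matrix.PosDef.one.add pdx4
  -- values of the brackets
  have e12 : B 1 2 = t 1 * (1 + x 2)⁻¹ * (t 1)ᵀ := by
    rw [hB_rec 1 2 le_rfl (by norm_num), hB_diag 2 (by norm_num)]
  have e23 : B 2 3 = t 2 * (1 + x 3)⁻¹ * (t 2)ᵀ := by
    rw [hB_rec 2 3 (by norm_num) (by norm_num), hB_diag 3 (by norm_num)]
  have e34 : B 3 4 = t 3 * (1 + x 4)⁻¹ * (t 3)ᵀ := by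
    rw [hB_rec 3 4 (by norm_num) (by norm_num), hB_diag 4 (by norm_num)]
  have e13 : B 1 3 = t 1 * (1 + B 2 3)⁻¹ * (t 1)ᵀ := hB_rec 1 3 le_rfl (by norm_num)
  have e24 : B 2 4 = t 2 * (1 + B 3 4)⁻¹ * (t 2)ᵀ := hB_rec 2 4 (by norm_num) (by norm_num)
  have e14 : B 1 4 = t 1 * (1 + B 2 4)⁻¹ * (t 1)ᵀ := hB_rec 1 4 le_rfl (by norm_num)
  have pdB34 : (B 3 4).PosDef := by
    rw [e34]; exact posDef_conj pd1x4.inv (t 3) (hu 3 (by norm_num))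
  have pd1B34 : (1 + B 3 4).PosDef := Matrix.PosDef.one.add pdB34
  have pdB23 : (B 2 3).PosDef := by
    rw [e23]; exact posDef_conj pd1x3.inv (t 2) (hu 2 (by norm_num))
  have pd1B23 : (1 + B 2 3).PosDef := Matrix.PosDef.one.add pdB23
  have pdB24 : (B 2 4).PosDef := by
    rw [e24]; exact posDef_conj pd1B34.inv (t 2) (hu 2 (by norm_num))
  have pd1B24 : (1 + B 2 4).PosDef := Matrix.PosDef.one.add pdB24
  haveI : Invertible (x 3) := (x 3).invertibleOfIsUnitDet (pdu pdx3)
  haveI : Invertible (x 4) := (x 4).invertibleOfIsUnitDet (pdu pdx4)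
  haveI : Invertible (1 + x 2) := Matrix.invertibleOfIsUnitDet _ (pdu pd1x2)
  haveI : Invertible (1 + x 3) := Matrix.invertibleOfIsUnitDet _ (pdu pd1x3)
  haveI : Invertible (1 + x 4) := Matrix.invertibleOfIsUnitDet _ (pdu pd1x4)
  haveI : Invertible (1 + B 2 3) := Matrix.invertibleOfIsUnitDet _ (pdu pd1B23)
  haveI : Invertible (1 + B 3 4) := Matrix.invertibleOfIsUnitDet _ (pdu pd1B34)
  haveI : Invertible (1 + B 2 4) := Matrix.invertibleOfIsUnitDet _ (pdu pd1B24)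
  -- inverses of the convergents
  have hinv12 : (B 1 2)⁻¹ = ((t 1)ᵀ)⁻¹ * (1 + x 2) * (t 1)⁻¹ := by
    rw [e12]
    apply Matrix.inv_eq_right_inv
    simp [Matrix.mul_assoc, Matrix.mul_inv_cancel_left_of_invertible,
      Matrix.inv_mul_cancel_left_of_invertible, Matrix.mul_inv_of_invertible,
      Matrix.inv_mul_of_invertible]
  have hinv13 : (B 1 3)⁻¹ = ((t 1)ᵀ)⁻¹ * (1 + B 2 3) * (t 1)⁻¹ := by
    rw [e13]
    apply Matrix.inv_eq_right_inv
    simp [Matrix.mul_assoc, Matrix.mul_inv_cancel_left_of_invertible,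
      Matrix.inv_mul_cancel_left_of_invertible, Matrix.mul_inv_of_invertible,
      Matrix.inv_mul_of_invertible]
  have hinv14 : (B 1 4)⁻¹ = ((t 1)ᵀ)⁻¹ * (1 + B 2 4) * (t 1)⁻¹ := by
    rw [e14]
    apply Matrix.inv_eq_right_inv
    simp [Matrix.mul_assoc, Matrix.mul_inv_cancel_left_of_invertible,
      Matrix.inv_mul_cancel_left_of_invertible, Matrix.mul_inv_of_invertible,
      Matrix.inv_mul_of_invertible]
  -- first term
  have hd1 : (B 1 2)⁻¹ - (B 1 3)⁻¹ = ((t 1)ᵀ)⁻¹ * (x 2 - B 2 3) * (t 1)⁻¹ := by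
    rw [hinv12, hinv13]; noncomm_ring
  have hE1 : x 2 - B 2 3 = t 2 * (x 3 * (1 + x 3)⁻¹) * (t 2)ᵀ := by
    have h1 : x 3 * (1 + x 3)⁻¹ = 1 - (1 + x 3)⁻¹ := by
      have h2 : (1 + x 3) * (1 + x 3)⁻¹ = 1 := Matrix.mul_inv_of_invertible _
      calc x 3 * (1 + x 3)⁻¹ = (1 + x 3) * (1 + x 3)⁻¹ - 1 * (1 + x 3)⁻¹ := by noncomm_ring
        _ = 1 - (1 + x 3)⁻¹ := by rw [h2, one_mul]
    rw [hx 2 (by norm_num), e23, h1]; noncomm_ring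
  have hTerm1 : ((B 1 2)⁻¹ - (B 1 3)⁻¹)⁻¹
      = t 1 * (((t 2)ᵀ)⁻¹ * ((1 + x 3) * ((x 3)⁻¹ * (t 2)⁻¹))) * (t 1)ᵀ := by
    rw [hd1, hE1]
    apply Matrix.inv_eq_right_inv
    simp [Matrix.mul_assoc, Matrix.mul_inv_cancel_left_of_invertible,
      Matrix.inv_mul_cancel_left_of_invertible, Matrix.mul_inv_of_invertible,
      Matrix.inv_mul_of_invertible]
  -- second term
  have hd2 : (B 1 3)⁻¹ - (B 1 4)⁻¹ = ((t 1)ᵀ)⁻¹ * (B 2 3 - B 2 4) * (t 1)⁻¹ := by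
    rw [hinv13, hinv14]; noncomm_ring
  have hH : B 3 4 - x 3 = -(t 3 * (x 4 * (1 + x 4)⁻¹) * (t 3)ᵀ) := by
    have h1 : x 4 * (1 + x 4)⁻¹ = 1 - (1 + x 4)⁻¹ := by
      have h2 : (1 + x 4) * (1 + x 4)⁻¹ = 1 := Matrix.mul_inv_of_invertible _
      calc x 4 * (1 + x 4)⁻¹ = (1 + x 4) * (1 + x 4)⁻¹ - 1 * (1 + x 4)⁻¹ := by noncomm_ring
        _ = 1 - (1 + x 4)⁻¹ := by rw [h2, one_mul]
    rw [e34, hx 3 (by norm_num), h1]; noncomm_ring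
  have hG : B 2 3 - B 2 4
      = t 2 * ((1 + x 3)⁻¹ * ((B 3 4 - x 3) * (1 + B 3 4)⁻¹)) * (t 2)ᵀ := by
    have hF : (1 + x 3)⁻¹ - (1 + B 3 4)⁻¹
        = (1 + x 3)⁻¹ * ((B 3 4 - x 3) * (1 + B 3 4)⁻¹) := by
      have h1 : (1 + x 3)⁻¹ * (1 + x 3) = 1 := Matrix.inv_mul_of_invertible _
      have h2 : (1 + B 3 4) * (1 + B 3 4)⁻¹ = 1 := Matrix.mul_inv_of_invertible _
      calc (1 + x 3)⁻¹ - (1 + B 3 4)⁻¹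
          = (1 + x 3)⁻¹ * ((1 + B 3 4) * (1 + B 3 4)⁻¹)
            - ((1 + x 3)⁻¹ * (1 + x 3)) * (1 + B 3 4)⁻¹ := by rw [h1, h2]; noncomm_ring
        _ = (1 + x 3)⁻¹ * ((B 3 4 - x 3) * (1 + B 3 4)⁻¹) := by noncomm_ring
    calc B 2 3 - B 2 4 = t 2 * ((1 + x 3)⁻¹ - (1 + B 3 4)⁻¹) * (t 2)ᵀ := by
          rw [e23, e24]; noncomm_ring
      _ = _ := by rw [hF]
  have hTerm2 : ((B 1 3)⁻¹ - (B 1 4)⁻¹)⁻¹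
      = t 1 * (((t 2)ᵀ)⁻¹ * (-((1 + B 3 4) *
          (((t 3)ᵀ)⁻¹ * ((1 + x 4) * ((x 4)⁻¹ * ((t 3)⁻¹ * ((1 + x 3) * (t 2)⁻¹)))))))) * (t 1)ᵀ := by
    rw [hd2, hG, hH]
    apply Matrix.inv_eq_right_inv
    simp [Matrix.mul_assoc, neg_mul, mul_neg, neg_neg,
      Matrix.mul_inv_cancel_left_of_invertible,
      Matrix.inv_mul_cancel_left_of_invertible, Matrix.mul_inv_of_invertible,
      Matrix.inv_mul_of_invertible]
  -- the core identity
  have hx3i : (x 3)⁻¹ = ((t 3)ᵀ)⁻¹ * (t 3)⁻¹ := by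
    rw [hx 3 (by norm_num)]
    apply Matrix.inv_eq_right_inv
    simp [Matrix.mul_assoc, Matrix.mul_inv_cancel_left_of_invertible,
      Matrix.mul_inv_of_invertible]
  have hpp : (1 + x 4)⁻¹ * (x 4)⁻¹ = (x 4)⁻¹ - (1 + x 4)⁻¹ := by
    have h' : (1 + x 4) * ((x 4)⁻¹ - (1 + x 4)⁻¹) = (x 4)⁻¹ := by
      rw [mul_sub, Matrix.mul_inv_of_invertible, add_mul, one_mul,
        Matrix.mul_inv_of_invertible]
      abel
    calc (1 + x 4)⁻¹ * (x 4)⁻¹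
        = (1 + x 4)⁻¹ * ((1 + x 4) * ((x 4)⁻¹ - (1 + x 4)⁻¹)) := by rw [h']
      _ = (x 4)⁻¹ - (1 + x 4)⁻¹ := Matrix.inv_mul_cancel_left_of_invertible _ _
  have hpp1 : ∀ z : Matrix (Fin n) (Fin n) ℝ,
      (1 + x 4)⁻¹ * ((x 4)⁻¹ * z) = (x 4)⁻¹ * z - (1 + x 4)⁻¹ * z := by
    intro z; rw [← Matrix.mul_assoc, hpp, sub_mul]
  have core : (1 + x 3) * ((x 3)⁻¹ * (t 2)⁻¹)
      - (1 + B 3 4) * (((t 3)ᵀ)⁻¹ * ((1 + x 4) * ((x 4)⁻¹ * ((t 3)⁻¹ * ((1 + x 3) * (t 2)⁻¹)))))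
      = -(((t 3)ᵀ)⁻¹ * (1 + (t 3)ᵀ * t 3) * (x 4)⁻¹ * (1 + (t 3)ᵀ * t 3) * (t 3)⁻¹) * (t 2)⁻¹ := by
    rw [hx3i, e34, hx 3 (by norm_num)]
    simp only [mul_add, add_mul, mul_sub, sub_mul, mul_one, one_mul, Matrix.mul_assoc,
      Matrix.mul_inv_cancel_left_of_invertible, Matrix.inv_mul_cancel_left_of_invertible,
      Matrix.mul_inv_of_invertible, Matrix.inv_mul_of_invertible, hpp1,
      neg_mul, mul_neg, neg_neg, neg_add]
    abel
  rw [hTerm1, hTerm2]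
  calc t 1 * (((t 2)ᵀ)⁻¹ * ((1 + x 3) * ((x 3)⁻¹ * (t 2)⁻¹))) * (t 1)ᵀ
        + t 1 * (((t 2)ᵀ)⁻¹ * (-((1 + B 3 4) *
          (((t 3)ᵀ)⁻¹ * ((1 + x 4) * ((x 4)⁻¹ * ((t 3)⁻¹ * ((1 + x 3) * (t 2)⁻¹)))))))) * (t 1)ᵀ
      = t 1 * (((t 2)ᵀ)⁻¹ * ((1 + x 3) * ((x 3)⁻¹ * (t 2)⁻¹)
          - (1 + B 3 4) * (((t 3)ᵀ)⁻¹ * ((1 + x 4) * ((x 4)⁻¹ * ((t 3)⁻¹ * ((1 + x 3) * (t 2)⁻¹))))))) * (t 1)ᵀ := by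
        noncomm_ring
    _ = t 1 * (((t 2)ᵀ)⁻¹ * (-(((t 3)ᵀ)⁻¹ * (1 + (t 3)ᵀ * t 3) * (x 4)⁻¹ * (1 + (t 3)ᵀ * t 3) * (t 3)⁻¹) * (t 2)⁻¹)) * (t 1)ᵀ := by
        rw [core]
    _ = _ := by noncomm_ring
end
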